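/- Let n ≥ 1, q ≥ 1, and let u : ℝ × ℝⁿ → ℝⁿ be smooth with ∂ₜu + (u·∇)u = −∇h for some continuously differentiable h : ℝ × ℝⁿ → ℝ. Let Ψ : ℝ × ℝ^{2q} → ℝⁿ be twice continuously differentiable with ∂ₜΨ(t,s) = u(t, Ψ(t,s)) for all (t,s) (a moving parametrized 2q-dimensional surface transported along streamlines). Define I(t,s) = Σ_{σ ∈ Sym(2q)} sign(σ) Π_{i=1}^{q} ω(t, Ψ(t,s))(∂_{σ(2i−1)}Ψ(t,s), ∂_{σ(2i)}Ψ(t,s)), where ∂_a denotes the partial derivative in the a-th surface parameter. Then I(t,s) = I(0,s) for all t and s; consequently, for every compact measurable K ⊆ ℝ^{2q}, the integral t ↦ ∫_K I(t,s) ds is constant. -/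

import Mathlib

open scoped RealInnerProductSpace

/-- The vorticity 2-form `ω(t,x)(v,w) = ⟨D_x u v, w⟩ − ⟨D_x u w, v⟩` of a
time-dependent velocity field. -/
noncomputable def vorticity2Form {n : ℕ}
    (u : ℝ × EuclideanSpace ℝ (Fin n) → EuclideanSpace ℝ (Fin n))
    (t : ℝ) (x v w : EuclideanSpace ℝ (Fin n)) : ℝ :=
  ⟪fderiv ℝ (fun y => u (t, y)) x v, w⟫ - ⟪fderiv ℝ (fun y => u (t, y)) x w, v⟫

/-- The pullback to parameter space of the `2q`-form `ω^q` along a moving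
parametrized surface `Ψ`:
`I(t,s) = Σ_{σ ∈ Sym(2q)} sign(σ) Π_{i<q} ω(t,Ψ(t,s))(∂_{σ(2i)}Ψ, ∂_{σ(2i+1)}Ψ)`. -/
noncomputable def omegaPowPullback (n q : ℕ)
    (u : ℝ × EuclideanSpace ℝ (Fin n) → EuclideanSpace ℝ (Fin n))
    (Ψ : ℝ × (Fin (2 * q) → ℝ) → EuclideanSpace ℝ (Fin n))
    (t : ℝ) (s : Fin (2 * q) → ℝ) : ℝ :=
  ∑ σ : Equiv.Perm (Fin (2 * q)), ((Equiv.Perm.sign σ : ℤ) : ℝ) *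
    ∏ i : Fin q,
      vorticity2Form u t (Ψ (t, s))
        (fderiv ℝ (fun s' => Ψ (t, s')) s (Pi.single (σ ⟨2 * (i : ℕ), by omega⟩) 1))
        (fderiv ℝ (fun s' => Ψ (t, s')) s (Pi.single (σ ⟨2 * (i : ℕ) + 1, by omega⟩) 1))

/-- Conservation of `ω^q` on even-dimensional moving surfaces in isentropic flow:
the pullback density is pointwise constant in time, and hence its integral over any
compact measurable parameter set is a constant of motion. -/
theorem omega_pow_conserved_on_moving_surface (n q : ℕ) (hn : 1 ≤ n) (hq : 1 ≤ q)
    (u : ℝ × EuclideanSpace ℝ (Fin n) → EuclideanSpace ℝ (Fin n))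
    (hu : ContDiff ℝ (⊤ : ℕ∞) u)
    (h : ℝ × EuclideanSpace ℝ (Fin n) → ℝ) (hh : ContDiff ℝ 1 h)
    (euler : ∀ (t : ℝ) (x : EuclideanSpace ℝ (Fin n)),
      deriv (fun τ => u (τ, x)) t + fderiv ℝ (fun y => u (t, y)) x (u (t, x))
        = -gradient (fun y => h (t, y)) x)
    (Ψ : ℝ × (Fin (2 * q) → ℝ) → EuclideanSpace ℝ (Fin n)) (hΨ : ContDiff ℝ 2 Ψ)
    (htrans : ∀ (t : ℝ) (s : Fin (2 * q) → ℝ),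
      deriv (fun τ => Ψ (τ, s)) t = u (t, Ψ (t, s))) :
    (∀ (t : ℝ) (s : Fin (2 * q) → ℝ),
        omegaPowPullback n q u Ψ t s = omegaPowPullback n q u Ψ 0 s) ∧
    (∀ K : Set (Fin (2 * q) → ℝ), IsCompact K → MeasurableSet K →
      ∀ t : ℝ, (∫ s in K, omegaPowPullback n q u Ψ t s)
        = ∫ s in K, omegaPowPullback n q u Ψ 0 s) := by
  have huD : Differentiable ℝ u := hu.differentiable (by simp)
  have hu' : ContDiff ℝ (⊤ : ℕ∞) (fderiv ℝ u) := hu.fderiv_right (by simp)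
  have hΨD : Differentiable ℝ Ψ := hΨ.differentiable two_ne_zero
  have hΨ' : ContDiff ℝ 1 (fderiv ℝ Ψ) := hΨ.fderiv_right (by norm_num)
  -- spatial slices of `u`
  have hslu : ∀ (t : ℝ) (z : EuclideanSpace ℝ (Fin n)),
      HasFDerivAt (fun y => u (t, y))
        ((fderiv ℝ u (t, z)).comp ((0 : _ →L[ℝ] ℝ).prod (ContinuousLinearMap.id ℝ _))) z :=
    fun t z => (huD (t, z)).hasFDerivAt.comp z (HasFDerivAt.prodMk (hasFDerivAt_const t z) (hasFDerivAt_id z))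
  have fslu : ∀ (t : ℝ) z v, fderiv ℝ (fun y => u (t, y)) z v = fderiv ℝ u (t, z) (0, v) := by
    intro t z v
    rw [(hslu t z).fderiv]; rfl
  have htu : ∀ (t : ℝ) (z : EuclideanSpace ℝ (Fin n)),
      HasDerivAt (fun τ => u (τ, z)) (fderiv ℝ u (t, z) (1, 0)) t :=
    fun t z => (huD (t, z)).hasFDerivAt.comp_hasDerivAt t
      (HasDerivAt.prodMk (hasDerivAt_id t) (hasDerivAt_const t z))
  -- symmetry of second derivatives
  have symu : ∀ (p : ℝ × EuclideanSpace ℝ (Fin n)) v w,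
      fderiv ℝ (fderiv ℝ u) p v w = fderiv ℝ (fderiv ℝ u) p w v :=
    fun p v w => second_derivative_symmetric (fun y => (huD y).hasFDerivAt)
      ((hu'.differentiable (by simp) p).hasFDerivAt) v w
  have symΨ : ∀ (p : ℝ × (Fin (2*q) → ℝ)) v w,
      fderiv ℝ (fderiv ℝ Ψ) p v w = fderiv ℝ (fderiv ℝ Ψ) p w v :=
    fun p v w => second_derivative_symmetric (fun y => (hΨD y).hasFDerivAt)
      ((hΨ'.differentiable one_ne_zero p).hasFDerivAt) v w
  -- rearranged Euler equation
  have eulerA : ∀ (t : ℝ) (z : EuclideanSpace ℝ (Fin n)),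
      gradient (fun y => h (t, y)) z = -(fderiv ℝ u (t, z) (1, u (t, z))) := by
    intro t z
    have e := euler t z
    rw [(htu t z).deriv, fslu t z] at e
    have hsplit : fderiv ℝ u (t, z) (1, u (t, z))
        = fderiv ℝ u (t, z) (1, 0) + fderiv ℝ u (t, z) (0, u (t, z)) := by
      rw [← ContinuousLinearMap.map_add]
      congr 1
      simp [Prod.ext_iff]
    rw [hsplit, e, neg_neg]
  -- symmetry of the Hessian of `h`, expressed via the differentiated Euler equation
  have symH : ∀ (τ : ℝ) (z : EuclideanSpace ℝ (Fin n)) (v w : EuclideanSpace ℝ (Fin n)),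
      ⟪fderiv ℝ (fderiv ℝ u) (τ, z) (0, v) (1, u (τ, z))
        + fderiv ℝ u (τ, z) (0, fderiv ℝ u (τ, z) (0, v)), w⟫
      = ⟪fderiv ℝ (fderiv ℝ u) (τ, z) (0, w) (1, u (τ, z))
        + fderiv ℝ u (τ, z) (0, fderiv ℝ u (τ, z) (0, w)), v⟫ := by
    intro τ z v w
    have hc : HasFDerivAt (fun y => fderiv ℝ u (τ, y))
        ((fderiv ℝ (fderiv ℝ u) (τ, z)).comp
          ((0 : _ →L[ℝ] ℝ).prod (ContinuousLinearMap.id ℝ _))) z :=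
      (hu'.differentiable (by simp) (τ, z)).hasFDerivAt.comp z
        (HasFDerivAt.prodMk (hasFDerivAt_const τ z) (hasFDerivAt_id z))
    have hv : HasFDerivAt (fun y => ((1:ℝ), u (τ, y)))
        ((0 : _ →L[ℝ] ℝ).prod ((fderiv ℝ u (τ, z)).comp
          ((0 : _ →L[ℝ] ℝ).prod (ContinuousLinearMap.id ℝ _)))) z :=
      HasFDerivAt.prodMk (hasFDerivAt_const (1:ℝ) z) (hslu τ z)
    have hΦ := hc.clm_apply hv
    have hG : HasFDerivAt (fun y => gradient (fun y' => h (τ, y')) y)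
        (-((fderiv ℝ u (τ, z)).comp
            ((0 : _ →L[ℝ] ℝ).prod ((fderiv ℝ u (τ, z)).comp
              ((0 : _ →L[ℝ] ℝ).prod (ContinuousLinearMap.id ℝ _))))
          + ((fderiv ℝ (fderiv ℝ u) (τ, z)).comp
              ((0 : _ →L[ℝ] ℝ).prod (ContinuousLinearMap.id ℝ _))).flip (1, u (τ, z)))) z := by
      have heq : (fun y => gradient (fun y' => h (τ, y')) y)
          = fun y => -(fderiv ℝ u (τ, y) (1, u (τ, y))) := funext fun y => eulerA τ y
      rw [heq]; exact hΦ.neg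
    set T := InnerProductSpace.toDual ℝ (EuclideanSpace ℝ (Fin n)) with hT
    have hf' : ∀ y, HasFDerivAt (fun y' => h (τ, y'))
        ((fun y0 => T (gradient (fun y' => h (τ, y')) y0)) y) y := by
      intro y
      have hd : DifferentiableAt ℝ (fun y' => h (τ, y')) y :=
        DifferentiableAt.comp y (hh.differentiable one_ne_zero (τ, y))
          (DifferentiableAt.prodMk (differentiableAt_const τ) differentiableAt_id)
      exact hd.hasGradientAt.hasFDerivAt
    have hf'' : HasFDerivAt (fun y0 => T (gradient (fun y' => h (τ, y')) y0))
        ((T.toContinuousLinearEquiv.toContinuousLinearMap).comp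
          (-((fderiv ℝ u (τ, z)).comp
            ((0 : _ →L[ℝ] ℝ).prod ((fderiv ℝ u (τ, z)).comp
              ((0 : _ →L[ℝ] ℝ).prod (ContinuousLinearMap.id ℝ _))))
          + ((fderiv ℝ (fderiv ℝ u) (τ, z)).comp
              ((0 : _ →L[ℝ] ℝ).prod (ContinuousLinearMap.id ℝ _))).flip (1, u (τ, z))))) z :=
      (T.toContinuousLinearEquiv.toContinuousLinearMap.hasFDerivAt).comp z hG
    have sym := second_derivative_symmetric hf' hf'' v w
    simp only [ContinuousLinearMap.comp_apply, ContinuousLinearMap.neg_apply,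
      ContinuousLinearMap.add_apply, ContinuousLinearMap.flip_apply,
      ContinuousLinearMap.prod_apply, ContinuousLinearMap.zero_apply,
      ContinuousLinearMap.coe_id', id_eq, ContinuousLinearEquiv.coe_coe,
      LinearIsometryEquiv.coe_toContinuousLinearEquiv, map_neg, hT,
      InnerProductSpace.toDual_apply_apply, inner_neg_left] at sym
    simp only [inner_add_left] at sym ⊢
    linarith
  -- t-derivatives of `Ψ` and its jacobian
  have htΨ : ∀ (t : ℝ) (s0 : Fin (2*q) → ℝ),
      HasDerivAt (fun τ => Ψ (τ, s0)) (fderiv ℝ Ψ (t, s0) (1, 0)) t :=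
    fun t s0 => (hΨD (t, s0)).hasFDerivAt.comp_hasDerivAt t
      (HasDerivAt.prodMk (hasDerivAt_id t) (hasDerivAt_const t s0))
  have hgΨ : ∀ p : ℝ × (Fin (2*q) → ℝ),
      fderiv ℝ Ψ p ((1:ℝ), (0 : Fin (2*q) → ℝ)) = u (p.1, Ψ p) := by
    intro p
    have h1 := (htΨ p.1 p.2).deriv
    have h2 := htrans p.1 p.2
    simpa using h1.symm.trans h2
  have fslΨ : ∀ (t : ℝ) (s0 : Fin (2*q) → ℝ) v,
      fderiv ℝ (fun s' => Ψ (t, s')) s0 v = fderiv ℝ Ψ (t, s0) (0, v) := by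
    intro t s0 v
    have hsl : HasFDerivAt (fun s' => Ψ (t, s'))
        ((fderiv ℝ Ψ (t, s0)).comp ((0 : _ →L[ℝ] ℝ).prod (ContinuousLinearMap.id ℝ _))) s0 :=
      (hΨD (t, s0)).hasFDerivAt.comp s0 (HasFDerivAt.prodMk (hasFDerivAt_const t s0) (hasFDerivAt_id s0))
    rw [hsl.fderiv]; rfl
  -- the key pointwise conservation of each `ω(∂_aΨ, ∂_bΨ)`
  have key : ∀ (s : Fin (2*q) → ℝ) (a b : Fin (2*q)) (t : ℝ),
      ⟪fderiv ℝ u (t, Ψ (t, s)) (0, fderiv ℝ Ψ (t, s) (0, Pi.single a 1)),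
        fderiv ℝ Ψ (t, s) (0, Pi.single b 1)⟫
      - ⟪fderiv ℝ u (t, Ψ (t, s)) (0, fderiv ℝ Ψ (t, s) (0, Pi.single b 1)),
        fderiv ℝ Ψ (t, s) (0, Pi.single a 1)⟫
      = ⟪fderiv ℝ u (0, Ψ (0, s)) (0, fderiv ℝ Ψ (0, s) (0, Pi.single a 1)),
        fderiv ℝ Ψ (0, s) (0, Pi.single b 1)⟫
      - ⟪fderiv ℝ u (0, Ψ (0, s)) (0, fderiv ℝ Ψ (0, s) (0, Pi.single b 1)),
        fderiv ℝ Ψ (0, s) (0, Pi.single a 1)⟫ := by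
    intro s a b t
    have hx : ∀ τ : ℝ, HasDerivAt (fun ρ => Ψ (ρ, s)) (u (τ, Ψ (τ, s))) τ := by
      intro τ
      have h1 := htΨ τ s
      rw [hgΨ (τ, s)] at h1
      exact h1
    have hE : ∀ (c : Fin (2*q)) (τ : ℝ),
        HasDerivAt (fun ρ => fderiv ℝ Ψ (ρ, s) ((0:ℝ), Pi.single c 1))
          (fderiv ℝ u (τ, Ψ (τ, s)) (0, fderiv ℝ Ψ (τ, s) (0, Pi.single c 1))) τ := by
      intro c τ
      have hL : HasDerivAt (fun ρ => fderiv ℝ Ψ (ρ, s))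
          (fderiv ℝ (fderiv ℝ Ψ) (τ, s) (1, 0)) τ :=
        (hΨ'.differentiable one_ne_zero (τ, s)).hasFDerivAt.comp_hasDerivAt τ
          (HasDerivAt.prodMk (hasDerivAt_id τ) (hasDerivAt_const τ s))
      have h2 := hL.clm_apply (hasDerivAt_const τ (((0:ℝ), Pi.single c 1) : ℝ × (Fin (2*q) → ℝ)))
      have h3 : fderiv ℝ (fderiv ℝ Ψ) (τ, s) (1, 0) ((0:ℝ), Pi.single c 1)
          = fderiv ℝ u (τ, Ψ (τ, s)) (0, fderiv ℝ Ψ (τ, s) (0, Pi.single c 1)) := by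
        rw [symΨ (τ, s)]
        have hg1 : HasFDerivAt
            (fun p : ℝ × (Fin (2*q) → ℝ) => fderiv ℝ Ψ p ((1:ℝ), (0 : Fin (2*q) → ℝ)))
            ((fderiv ℝ Ψ (τ, s)).comp (0 : _ →L[ℝ] _)
              + (fderiv ℝ (fderiv ℝ Ψ) (τ, s)).flip ((1:ℝ), (0 : Fin (2*q) → ℝ))) (τ, s) :=
          ((hΨ'.differentiable one_ne_zero (τ, s)).hasFDerivAt).clm_apply (hasFDerivAt_const _ _)
        have hg2 : HasFDerivAt (fun p : ℝ × (Fin (2*q) → ℝ) => u (p.1, Ψ p))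
            ((fderiv ℝ u (τ, Ψ (τ, s))).comp
              ((ContinuousLinearMap.fst ℝ ℝ _).prod (fderiv ℝ Ψ (τ, s)))) (τ, s) :=
          (huD (τ, Ψ (τ, s))).hasFDerivAt.comp (τ, s)
            (HasFDerivAt.prodMk (hasFDerivAt_fst) (hΨD (τ, s)).hasFDerivAt)
        have hfe : (fun p : ℝ × (Fin (2*q) → ℝ) => fderiv ℝ Ψ p ((1:ℝ), (0 : Fin (2*q) → ℝ)))
            = fun p => u (p.1, Ψ p) := funext hgΨ
        rw [hfe] at hg1
        have h4 := hg1.unique hg2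
        have h5 := congrArg (fun (L : (ℝ × (Fin (2*q) → ℝ)) →L[ℝ] EuclideanSpace ℝ (Fin n)) =>
          L ((0:ℝ), Pi.single c 1)) h4
        simpa using h5
      rw [h3] at h2
      simpa using h2
    have hM : ∀ τ : ℝ, HasDerivAt (fun ρ => fderiv ℝ u (ρ, Ψ (ρ, s)))
        (fderiv ℝ (fderiv ℝ u) (τ, Ψ (τ, s)) (1, u (τ, Ψ (τ, s)))) τ :=
      fun τ => (hu'.differentiable (by simp) (τ, Ψ (τ, s))).hasFDerivAt.comp_hasDerivAt τ
        (HasDerivAt.prodMk (hasDerivAt_id τ) (hx τ))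
    have hF0 : ∀ τ : ℝ, HasDerivAt
        (fun ρ => ⟪fderiv ℝ u (ρ, Ψ (ρ, s)) (0, fderiv ℝ Ψ (ρ, s) (0, Pi.single a 1)),
            fderiv ℝ Ψ (ρ, s) (0, Pi.single b 1)⟫
          - ⟪fderiv ℝ u (ρ, Ψ (ρ, s)) (0, fderiv ℝ Ψ (ρ, s) (0, Pi.single b 1)),
            fderiv ℝ Ψ (ρ, s) (0, Pi.single a 1)⟫) (0:ℝ) τ := by
      intro τ
      have d1 := ((hM τ).clm_apply
        (HasDerivAt.prodMk (hasDerivAt_const τ (0:ℝ)) (hE a τ))).inner ℝ (hE b τ)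
      have d2 := ((hM τ).clm_apply
        (HasDerivAt.prodMk (hasDerivAt_const τ (0:ℝ)) (hE b τ))).inner ℝ (hE a τ)
      refine HasDerivAt.congr_deriv (d1.sub d2) ?_
      rw [symu (τ, Ψ (τ, s)) (1, u (τ, Ψ (τ, s)))
            ((0:ℝ), fderiv ℝ Ψ (τ, s) ((0:ℝ), Pi.single a 1)),
          symu (τ, Ψ (τ, s)) (1, u (τ, Ψ (τ, s)))
            ((0:ℝ), fderiv ℝ Ψ (τ, s) ((0:ℝ), Pi.single b 1)),
          symH τ (Ψ (τ, s)) (fderiv ℝ Ψ (τ, s) ((0:ℝ), Pi.single a 1))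
            (fderiv ℝ Ψ (τ, s) ((0:ℝ), Pi.single b 1)),
          real_inner_comm
            (fderiv ℝ u (τ, Ψ (τ, s)) ((0:ℝ), fderiv ℝ Ψ (τ, s) ((0:ℝ), Pi.single b 1)))
            (fderiv ℝ u (τ, Ψ (τ, s)) ((0:ℝ), fderiv ℝ Ψ (τ, s) ((0:ℝ), Pi.single a 1)))]
      ring
    exact is_const_of_deriv_eq_zero
      (fun τ => (hF0 τ).differentiableAt) (fun τ => (hF0 τ).deriv) t 0
  -- pointwise conservation of the pullback density
  have main : ∀ (t : ℝ) (s : Fin (2 * q) → ℝ),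
      omegaPowPullback n q u Ψ t s = omegaPowPullback n q u Ψ 0 s := by
    intro t s
    unfold omegaPowPullback
    refine Finset.sum_congr rfl fun σ _ => ?_
    congr 1
    refine Finset.prod_congr rfl fun i _ => ?_
    unfold vorticity2Form
    simp only [fslu, fslΨ]
    exact key s _ _ t
  exact ⟨main, fun K _ _ t => by simp only [main]⟩
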